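/- Combining the two preceding identities: for the recursive dirty-derivative scheme, the estimation error of the i-th derivative satisfies Ŵ_i − s^i W = −(∏_{j=i}^{k} F_j(s)) · s^{k+1} W in ℝ(s), where F_j(s) = ((s+σ)^j − σ^j)/(s(s+σ)^j). -/

import Mathlib

/-!
Write `eᵢ = Ŵᵢ − sⁱW` for the estimation error. The gain `σⁱsⁱ/(s+σ)ⁱ` and the filter `Fᵢ` satisfy
`σⁱsⁱ/(s+σ)ⁱ + Fᵢ sⁱ⁺¹ = sⁱ`, so the recursion for `Ŵᵢ` becomes `eᵢ = Fᵢ eᵢ₊₁`, while the same identity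
at `i = k` gives `eₖ = −Fₖ sᵏ⁺¹W`. Unrolling the first relation down to `k` yields the product formula.
-/

open RatFunc

theorem RatFunc.X_add_C_ne_zero {K : Type*} [Field K] (a : K) : (X + C a : RatFunc K) ≠ 0 := by
  simpa using RatFunc.algebraMap_ne_zero (Polynomial.X_add_C_ne_zero a)

theorem pow_mul_pow_div_add_sub_div_mul_pow_succ {K : Type*} [Field K] {x c : K}
    (hx : x ≠ 0) (hxc : x + c ≠ 0) (n : ℕ) :
    c ^ n * x ^ n / (x + c) ^ n + ((x + c) ^ n - c ^ n) / (x * (x + c) ^ n) * x ^ (n + 1) =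
      x ^ n := by
  field_simp
  ring

theorem Finset.eq_prod_Ico_mul_of_eq_mul_succ {M : Type*} [CommMonoid M] {e F : ℕ → M}
    {i k : ℕ} (hik : i ≤ k) (he : ∀ j ∈ Finset.Ico i k, e j = F j * e (j + 1)) :
    e i = (∏ j ∈ Finset.Ico i k, F j) * e k := by
  induction k, hik using Nat.le_induction with
  | base => simp
  | succ k hik ih =>
    have hIco : Finset.Ico i k ⊆ Finset.Ico i (k + 1) :=
      Finset.Ico_subset_Ico_right k.le_succ
    rw [ih fun j hj => he j (hIco hj), he k (by simpa using hik),
      Finset.prod_Ico_succ_top hik, mul_assoc]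

theorem dirty_derivative_error_product_general (σ : ℝ) (k : ℕ)
    (W : RatFunc ℝ) (F : ℕ → RatFunc ℝ)
    (hF : ∀ j, F j = ((RatFunc.X + RatFunc.C σ) ^ j - RatFunc.C σ ^ j) /
        (RatFunc.X * (RatFunc.X + RatFunc.C σ) ^ j))
    (What : ℕ → RatFunc ℝ)
    (hWk : What k = (RatFunc.C σ ^ k * RatFunc.X ^ k) / (RatFunc.X + RatFunc.C σ) ^ k * W)
    (hWrec : ∀ i, 1 ≤ i → i < k →
      What i = (RatFunc.C σ ^ i * RatFunc.X ^ i) / (RatFunc.X + RatFunc.C σ) ^ i * W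
        + F i * What (i + 1))
    (i : ℕ) (hi : 1 ≤ i) (hik : i ≤ k) :
    What i - RatFunc.X ^ i * W =
      -(∏ j ∈ Finset.Icc i k, F j) * RatFunc.X ^ (k + 1) * W := by
  have hgain (j : ℕ) : C σ ^ j * X ^ j / (X + C σ) ^ j + F j * X ^ (j + 1) = X ^ j := by
    rw [hF]
    exact pow_mul_pow_div_add_sub_div_mul_pow_succ X_ne_zero (X_add_C_ne_zero σ) j
  have herror : ∀ j ∈ Finset.Ico i k, What j - X ^ j * W =
      F j * (What (j + 1) - X ^ (j + 1) * W) := by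
    intro j hj
    rw [Finset.mem_Ico] at hj
    rw [hWrec j (hi.trans hj.1) hj.2]
    linear_combination W * hgain j
  have herror_k : What k - X ^ k * W = -F k * X ^ (k + 1) * W := by
    rw [hWk]
    linear_combination W * hgain k
  rw [Finset.eq_prod_Ico_mul_of_eq_mul_succ (e := fun j => What j - X ^ j * W) hik herror,
    herror_k, ← Finset.Ico_add_one_right_eq_Icc, Finset.prod_Ico_succ_top hik]
  ring

/-- Combined error identity for the recursive dirty-derivative estimator:
`Ŵ_i − s^i W = −(∏_{j=i}^{k} F_j(s)) · s^{k+1} W` in ℝ(s). -/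
theorem dirty_derivative_error_product (σ : ℝ) (hσ : σ ≠ 0) (k : ℕ) (hk : 1 ≤ k)
    (W : RatFunc ℝ) (F : ℕ → RatFunc ℝ)
    (hF : ∀ j, F j = ((RatFunc.X + RatFunc.C σ) ^ j - RatFunc.C σ ^ j) /
        (RatFunc.X * (RatFunc.X + RatFunc.C σ) ^ j))
    (What : ℕ → RatFunc ℝ)
    (hWk : What k = (RatFunc.C σ ^ k * RatFunc.X ^ k) / (RatFunc.X + RatFunc.C σ) ^ k * W)
    (hWrec : ∀ i, 1 ≤ i → i < k →
      What i = (RatFunc.C σ ^ i * RatFunc.X ^ i) / (RatFunc.X + RatFunc.C σ) ^ i * W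
        + F i * What (i + 1))
    (i : ℕ) (hi : 1 ≤ i) (hik : i ≤ k) :
    What i - RatFunc.X ^ i * W =
      -(∏ j ∈ Finset.Icc i k, F j) * RatFunc.X ^ (k + 1) * W :=
  dirty_derivative_error_product_general σ k W F hF What hWk hWrec i hi hik
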